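/- The ratios of diameter numbers to side numbers converge to √2: for the side and diameter number sequences, the sequence of real numbers d(n)/a(n) tends to √2 as n → ∞. -/

import Mathlib

/-- The pair (side number, diameter number) at stage `n`:
`(a 0, d 0) = (1, 1)`, `a (n+1) = a n + d n`, `d (n+1) = 2 * a n + d n`. -/
def sideDiam : ℕ → ℕ × ℕ
  | 0 => (1, 1)
  | n + 1 => ((sideDiam n).1 + (sideDiam n).2, 2 * (sideDiam n).1 + (sideDiam n).2)

/-- The side numbers: `a 0 = 1`, `a (n+1) = a n + d n`. -/
def sideNum (n : ℕ) : ℕ := (sideDiam n).1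

/-- The diameter numbers: `d 0 = 1`, `d (n+1) = 2 * a n + d n`. -/
def diamNum (n : ℕ) : ℕ := (sideDiam n).2

open Filter Real

/-! The Pell-type identity `d n ^ 2 - 2 a n ^ 2 = ±1` gives `(d n / a n) ^ 2 = 2 ∓ 1 / a n ^ 2`,
and `a n → ∞`; so the squares of the ratios tend to `2`, and the ratios, being nonnegative, to
`√2`. -/

@[simp] lemma sideNum_zero : sideNum 0 = 1 := rfl

@[simp] lemma diamNum_zero : diamNum 0 = 1 := rfl

lemma sideNum_succ (n : ℕ) : sideNum (n + 1) = sideNum n + diamNum n := rfl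

lemma diamNum_succ (n : ℕ) : diamNum (n + 1) = 2 * sideNum n + diamNum n := rfl

lemma one_le_diamNum (n : ℕ) : 1 ≤ diamNum n := by
  induction n with
  | zero => simp
  | succ n ih => rw [diamNum_succ]; omega

lemma succ_le_sideNum (n : ℕ) : n + 1 ≤ sideNum n := by
  induction n with
  | zero => simp
  | succ n ih => have := one_le_diamNum n; rw [sideNum_succ]; omega

lemma tendsto_sideNum_atTop : Tendsto (fun n ↦ (sideNum n : ℝ)) atTop atTop :=
  tendsto_atTop_mono (fun n ↦ by exact_mod_cast Nat.le_of_succ_le (succ_le_sideNum n))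
    tendsto_natCast_atTop_atTop

lemma diamNum_sq_add_neg_one_pow (n : ℕ) :
    (diamNum n : ℝ) ^ 2 + (-1) ^ n = 2 * (sideNum n : ℝ) ^ 2 := by
  induction n with
  | zero => norm_num
  | succ n ih =>
    rw [diamNum_succ, sideNum_succ, pow_succ]
    push_cast
    linear_combination (-1 : ℝ) * ih

lemma diam_div_side_sq (n : ℕ) :
    ((diamNum n : ℝ) / sideNum n) ^ 2 = 2 - (-1) ^ n / (sideNum n : ℝ) ^ 2 := by
  have ha : (sideNum n : ℝ) ≠ 0 := by
    have := succ_le_sideNum n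
    norm_cast
    omega
  field_simp
  linarith [diamNum_sq_add_neg_one_pow n]

lemma tendsto_diam_div_side_sq :
    Tendsto (fun n ↦ ((diamNum n : ℝ) / sideNum n) ^ 2) atTop (nhds 2) := by
  have hinv : Tendsto (fun n ↦ ((sideNum n : ℝ) ^ 2)⁻¹) atTop (nhds 0) :=
    ((tendsto_pow_atTop two_ne_zero).comp tendsto_sideNum_atTop).inv_tendsto_atTop
  have herr : Tendsto (fun n ↦ (-1 : ℝ) ^ n / (sideNum n : ℝ) ^ 2) atTop (nhds 0) :=
    squeeze_zero_norm (fun n ↦ by simp [norm_div]) hinv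
  simpa only [diam_div_side_sq, sub_zero] using herr.const_sub 2

theorem diam_div_side_tendsto_sqrt_two :
    Filter.Tendsto (fun n : ℕ => (diamNum n : ℝ) / (sideNum n : ℝ))
      Filter.atTop (nhds (Real.sqrt 2)) := by
  have hsqrt := (continuous_sqrt.tendsto 2).comp tendsto_diam_div_side_sq
  exact hsqrt.congr fun n ↦ sqrt_sq (by positivity)
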